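/- arXiv:0902.0212 — 7 statements merged into one kernel-verified Lean document; each statement's English description precedes it below -/
import Mathlib

section
/- Let A and B be algebras over a commutative ring R and φ : A → B an R-algebra homomorphism. If N is a left Mathieu subspace of B, then φ⁻¹(N) is a left Mathieu subspace of A. -/
def IsLeftMathieuSet {M : Type*} [Monoid M] (N : Set M) : Prop :=
  ∀ x y : M, (∀ m : ℕ, 1 ≤ m → x ^ m ∈ N) → ∃ N₀ : ℕ, ∀ m : ℕ, N₀ ≤ m → y * x ^ m ∈ N

theorem IsLeftMathieuSet.preimage {M M' F : Type*} [Monoid M] [Monoid M'] [FunLike F M M']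
    [MonoidHomClass F M M'] (f : F) {N : Set M'} (hN : IsLeftMathieuSet N) :
    IsLeftMathieuSet (f ⁻¹' N) := by
  intro x y hx
  obtain ⟨N₀, hN₀⟩ := hN (f x) (f y) fun m hm => by simpa only [Set.mem_preimage, map_pow] using hx m hm
  exact ⟨N₀, fun m hm => by simpa only [Set.mem_preimage, map_mul, map_pow] using hN₀ m hm⟩

theorem stmt4 {R A B : Type*} [CommRing R] [Ring A] [Ring B]
    [Algebra R A] [Algebra R B] (φ : A →ₐ[R] B) (N : Submodule R B)
    (hN : ∀ x y : B, (∀ m : ℕ, 1 ≤ m → x ^ m ∈ N) →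
      ∃ N₀ : ℕ, ∀ m : ℕ, N₀ ≤ m → y * x ^ m ∈ N) :
    ∀ a b : A, (∀ m : ℕ, 1 ≤ m → a ^ m ∈ N.comap φ.toLinearMap) →
      ∃ N₀ : ℕ, ∀ m : ℕ, N₀ ≤ m → b * a ^ m ∈ N.comap φ.toLinearMap :=
  IsLeftMathieuSet.preimage φ (N := (N : Set B)) hN
end

section
/- Let K be an uncountable field, A a commutative K-algebra, and M a Mathieu subspace of A. Then M[z], the set of polynomials in one variable z with all coefficients in M, is a Mathieu subspace of the polynomial algebra A[z]. -/
/-!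
Evaluating at `c ∈ K` is a ring map `A[z] → A` sending `M[z]` into `M`, so the Mathieu property
of `M` gives, for each `c`, a threshold `N c` with `f(c)^m g(c) ∈ M` for `m ≥ N c`. As `K` is
uncountable, one threshold `n` serves infinitely many `c`. For `m ≥ n` the polynomial `f^m g`
then takes values in `M` at infinitely many points of `K`; composing with any linear functional
on the `K`-vector space `A ⧸ M` gives a scalar polynomial with infinitely many roots, hence zero,
so all coefficients of `f^m g` lie in `M`.
-/

open Polynomial

theorem Set.exists_not_countable_preimage_singleton {α β : Type*} [Uncountable α] [Countable β]
    (f : α → β) : ∃ b, ¬(f ⁻¹' {b}).Countable := by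
  by_contra! h
  refine not_countable (α := α) (Set.countable_univ_iff.mp ?_)
  exact (Set.countable_iUnion h).mono fun a _ => Set.mem_iUnion.mpr ⟨f a, rfl⟩

theorem Module.eq_zero_of_sum_pow_smul_eq_zero {K V : Type*} [Field K] [AddCommGroup V]
    [Module K V] {s : Finset ℕ} {v : ℕ → V} {S : Set K} (hS : S.Infinite)
    (h : ∀ c ∈ S, ∑ j ∈ s, c ^ j • v j = 0) {j : ℕ} (hj : j ∈ s) : v j = 0 := by
  refine (Module.forall_dual_apply_eq_zero_iff K _).mp fun φ => ?_
  set P : K[X] := ∑ k ∈ s, C (φ (v k)) * X ^ k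
  have hP : P = 0 := by
    refine P.eq_zero_of_infinite_isRoot (hS.mono fun c hc => ?_)
    have := congrArg φ (h c hc)
    simp only [map_sum, map_smul, smul_eq_mul, map_zero] at this
    simp only [P, IsRoot.def, eval_finsetSum, eval_mul, eval_C, eval_pow, eval_X, ← this]
    exact Finset.sum_congr rfl fun k _ => mul_comm _ _
  simpa [P, finsetSum_coeff, coeff_C_mul_X_pow, hj] using congrArg (coeff · j) hP

theorem Polynomial.eval_algebraMap_eq_sum_smul {K A : Type*} [CommSemiring K] [Semiring A]
    [Algebra K A] (p : A[X]) (c : K) :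
    p.eval (algebraMap K A c) = ∑ i ∈ p.support, c ^ i • p.coeff i := by
  rw [eval_eq_sum, Polynomial.sum_def]
  refine Finset.sum_congr rfl fun i _ => ?_
  rw [← map_pow, Algebra.smul_def, Algebra.commutes]

theorem Polynomial.eval_algebraMap_mem_of_coeff_mem {K A : Type*} [CommSemiring K] [Semiring A]
    [Algebra K A] {M : Submodule K A} {p : A[X]} (hp : ∀ i, p.coeff i ∈ M) (c : K) :
    p.eval (algebraMap K A c) ∈ M := by
  rw [eval_algebraMap_eq_sum_smul]
  exact M.sum_mem fun i _ => M.smul_mem _ (hp i)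

theorem Polynomial.coeff_mem_of_eval_algebraMap_mem {K A : Type*} [Field K] [Ring A]
    [Algebra K A] {M : Submodule K A} {p : A[X]} {S : Set K} (hS : S.Infinite)
    (hp : ∀ c ∈ S, p.eval (algebraMap K A c) ∈ M) (i : ℕ) : p.coeff i ∈ M := by
  by_cases hi : i ∈ p.support
  · rw [← Submodule.Quotient.mk_eq_zero]
    refine Module.eq_zero_of_sum_pow_smul_eq_zero (v := fun j => M.mkQ (p.coeff j)) hS
      (fun c hc => ?_) hi
    have := (Submodule.Quotient.mk_eq_zero M).mpr (hp c hc)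
    rwa [eval_algebraMap_eq_sum_smul, ← M.mkQ_apply, map_sum] at this
  · rw [notMem_support_iff.mp hi]
    exact M.zero_mem

theorem stmt6 {K A : Type*} [Field K] [Uncountable K] [CommRing A] [Algebra K A]
    (M : Submodule K A)
    (hM : ∀ a b : A, (∀ m : ℕ, 1 ≤ m → a ^ m ∈ M) →
      ∃ N : ℕ, ∀ m : ℕ, N ≤ m → a ^ m * b ∈ M) :
    ∀ f g : Polynomial A, (∀ m : ℕ, 1 ≤ m → ∀ i : ℕ, (f ^ m).coeff i ∈ M) →
      ∃ N : ℕ, ∀ m : ℕ, N ≤ m → ∀ i : ℕ, (f ^ m * g).coeff i ∈ M := by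
  intro f g hf
  have hpow (c : K) (m : ℕ) (hm : 1 ≤ m) : f.eval (algebraMap K A c) ^ m ∈ M := by
    simpa using eval_algebraMap_mem_of_coeff_mem (hf m hm) c
  choose N hN using fun c => hM _ (g.eval (algebraMap K A c)) (hpow c)
  obtain ⟨n, hn⟩ := Set.exists_not_countable_preimage_singleton N
  refine ⟨n, fun m hm => coeff_mem_of_eval_algebraMap_mem (fun hfin => hn hfin.countable)
    fun c hc => ?_⟩
  simpa using hN c m (hc ▸ hm)
end

section
/- Let σ be a positive atomic measure supported on finitely many points u₁,...,u_k of an open set B ⊂ ℝⁿ, with σ(uᵢ) > 0 for all i. Then the subspace M_B(σ) = {f ∈ ℂ[z] : Σᵢ σ(uᵢ) f(uᵢ) = 0} is a Mathieu subspace of ℂ[z]: if f ∈ ℂ[z] satisfies Σᵢ σ(uᵢ) f(uᵢ)^m = 0 for all m ≥ 1, then f(uᵢ) = 0 for all i, and hence Σᵢ σ(uᵢ) f(uᵢ)^m g(uᵢ) = 0 for all g ∈ ℂ[z] and all m ≥ 1. -/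
open Finset

/-- Vandermonde step: if distinct nonzero `c j` satisfy `∑ j, W j * c j ^ m = 0`
for all `m ≥ 1`, then `W = 0`. -/
lemma aux_vandermonde {s : ℕ} (c : Fin s → ℂ) (hc : Function.Injective c)
    (h0 : ∀ j, c j ≠ 0) (W : Fin s → ℂ)
    (hW : ∀ m : ℕ, 1 ≤ m → ∑ j, W j * c j ^ m = 0) : W = 0 := by
  have key : (fun j => W j * c j) = 0 := by
    apply Matrix.eq_zero_of_forall_pow_sum_mul_pow_eq_zero hc
    intro i
    have := hW ((i : ℕ) + 1) (Nat.le_add_left 1 _)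
    rw [← this]
    refine Finset.sum_congr rfl fun j _ => ?_
    ring
  funext j
  have := congrFun key j
  simp only [Pi.zero_apply] at this
  rcases mul_eq_zero.mp this with h | h
  · exact h
  · exact absurd h (h0 j)

/-- kernel of a positive finitely-supported atomic measure on
polynomials is a Mathieu subspace of `ℂ[z₁,...,zₙ]`. -/
theorem stmt11 {n k : ℕ} (u : Fin k → (Fin n → ℝ)) (hu : Function.Injective u)
    (σ : Fin k → ℝ) (hσ : ∀ i, 0 < σ i)
    (f : MvPolynomial (Fin n) ℂ)
    (hf : ∀ m : ℕ, 1 ≤ m →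
      (∑ i, (σ i : ℂ) * MvPolynomial.eval (fun j => ((u i j : ℝ) : ℂ)) (f ^ m)) = 0) :
    (∀ i, MvPolynomial.eval (fun j => ((u i j : ℝ) : ℂ)) f = 0) ∧
    (∀ g : MvPolynomial (Fin n) ℂ, ∀ m : ℕ, 1 ≤ m →
      (∑ i, (σ i : ℂ) * MvPolynomial.eval (fun j => ((u i j : ℝ) : ℂ)) (f ^ m * g)) = 0) := by
  classical
  set v : Fin k → ℂ := fun i => MvPolynomial.eval (fun j => ((u i j : ℝ) : ℂ)) f with hv
  -- the finite set of distinct nonzero values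
  set T : Finset ℂ := (Finset.univ.image v).erase 0 with hT
  set w : ℂ → ℂ := fun c => ∑ i ∈ Finset.univ.filter (fun i => v i = c), (σ i : ℂ) with hw
  -- grouped sums vanish
  have key : ∀ m : ℕ, 1 ≤ m → ∑ c ∈ T, w c * c ^ m = 0 := by
    intro m hm
    have h1 := hf m hm
    have h2 : ∀ i, MvPolynomial.eval (fun j => ((u i j : ℝ) : ℂ)) (f ^ m) = v i ^ m := by
      intro i; simp [hv, map_pow]
    rw [Finset.sum_congr rfl (fun i _ => by rw [h2 i])] at h1
    -- fiberwise sum over image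
    have h3 : ∑ c ∈ Finset.univ.image v, w c * c ^ m
        = ∑ i, (σ i : ℂ) * v i ^ m := by
      rw [← Finset.sum_fiberwise_of_maps_to (fun i _ => Finset.mem_image_of_mem v (Finset.mem_univ i))]
      refine Finset.sum_congr rfl fun c hc => ?_
      rw [hw, Finset.sum_mul]
      refine Finset.sum_congr rfl fun i hi => ?_
      rw [Finset.mem_filter] at hi
      rw [hi.2]
    have h4 : ∑ c ∈ T, w c * c ^ m = ∑ c ∈ Finset.univ.image v, w c * c ^ m := by
      rw [hT]
      by_cases h : (0 : ℂ) ∈ Finset.univ.image v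
      · rw [Finset.sum_erase _ (by simp [zero_pow (Nat.one_le_iff_ne_zero.mp hm)])]
      · rw [Finset.erase_eq_of_notMem h]
    rw [h4, h3, h1]
  -- enumerate T
  set s := T.card with hs
  have e : Fin s ≃ {x // x ∈ T} := T.equivFin.symm
  set c : Fin s → ℂ := fun j => (e j : ℂ) with hc
  have hcinj : Function.Injective c := fun a b hab => e.injective (Subtype.ext hab)
  have hc0 : ∀ j, c j ≠ 0 := fun j => Finset.ne_of_mem_erase (e j).2
  have hWzero : (fun j => w (c j)) = 0 := by
    apply aux_vandermonde c hcinj hc0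
    intro m hm
    have := key m hm
    rw [← this]
    rw [← Finset.sum_attach T (fun x => w x * x ^ m)]
    exact (Equiv.sum_comp e (fun x => w (x : ℂ) * (x : ℂ) ^ m)).symm ▸ rfl
  -- so w c = 0 for all c ∈ T
  have hwT : ∀ x ∈ T, w x = 0 := by
    intro x hx
    have := congrFun hWzero (e.symm ⟨x, hx⟩)
    simpa [hc] using this
  -- but w c ≠ 0 for c ∈ T: positive real part
  have hv0 : ∀ i, v i = 0 := by
    intro i
    by_contra hne
    have hmem : v i ∈ T := Finset.mem_erase.mpr ⟨hne, Finset.mem_image_of_mem v (Finset.mem_univ i)⟩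
    have h0 := hwT (v i) hmem
    have : w (v i) = ((∑ j ∈ Finset.univ.filter (fun j => v j = v i), σ j : ℝ) : ℂ) := by
      rw [hw]; push_cast; rfl
    rw [this] at h0
    have hpos : 0 < ∑ j ∈ Finset.univ.filter (fun j => v j = v i), σ j := by
      apply Finset.sum_pos (fun j _ => hσ j)
      exact ⟨i, Finset.mem_filter.mpr ⟨Finset.mem_univ i, rfl⟩⟩
    exact hpos.ne' (by exact_mod_cast h0)
  refine ⟨hv0, ?_⟩
  intro g m hm
  have : ∀ i, MvPolynomial.eval (fun j => ((u i j : ℝ) : ℂ)) (f ^ m * g) = 0 := by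
    intro i
    rw [map_mul, map_pow]
    have : MvPolynomial.eval (fun j => ((u i j : ℝ) : ℂ)) f = 0 := hv0 i
    rw [this, zero_pow (Nat.one_le_iff_ne_zero.mp hm), zero_mul]
  simp [this]
end

section
/- Let K be a field, S = {u₁,...,u_k} a finite set of distinct points in Kⁿ, and a₁,...,a_k ∈ K nonzero. Suppose there exists a nonempty subset S' ⊂ S such that Σ_{uᵢ ∈ S'} aᵢ = 0. Then the subspace M = {f ∈ K[z₁,...,z_n] : Σᵢ aᵢ f(uᵢ) = 0} is NOT a Mathieu subspace of K[z₁,...,z_n]. -/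
/-!
Distinct points of `Kⁿ` are separated by polynomials, so any function on finitely many
of them is interpolated by a polynomial. Take `f` equal to `1` on `S'` and `0` elsewhere, and `g`
supported at one point `u i₀` of `S'`. Then `Σ aᵢ f^m(uᵢ) = Σ_{S'} aᵢ = 0` for all `m ≥ 1`, while
`Σ aᵢ (f^m g)(uᵢ) = a_{i₀} ≠ 0` for every `m`.
-/

open MvPolynomial Finset

namespace MvPolynomial

variable {K σ ι : Type*} [Field K]

lemma exists_eval_eq_one_eval_eq_zero {x y : σ → K} (hxy : x ≠ y) :
    ∃ p : MvPolynomial σ K, eval x p = 1 ∧ eval y p = 0 := by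
  obtain ⟨c, hc⟩ := Function.ne_iff.mp hxy
  refine ⟨C (x c - y c)⁻¹ * (X c - C (y c)), ?_, by simp⟩
  simp [inv_mul_cancel₀ (sub_ne_zero.mpr hc)]

lemma exists_eval_eq_pi_single [Fintype ι] [DecidableEq ι] {u : ι → σ → K}
    (hu : Function.Injective u) (j : ι) :
    ∃ p : MvPolynomial σ K, ∀ i, eval (u i) p = (Pi.single j 1 : ι → K) i := by
  choose q hq using fun i : {i // i ≠ j} => exists_eval_eq_one_eval_eq_zero (hu.ne i.2.symm)
  refine ⟨∏ i, q i, fun i => ?_⟩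
  rw [eval_prod]
  by_cases hij : i = j
  · subst hij
    simp [fun i => (hq i).1]
  · rw [Pi.single_eq_of_ne hij]
    exact prod_eq_zero (mem_univ ⟨i, hij⟩) (hq ⟨i, hij⟩).2

theorem exists_eval_eq [Finite ι] {u : ι → σ → K} (hu : Function.Injective u)
    (v : ι → K) : ∃ p : MvPolynomial σ K, ∀ i, eval (u i) p = v i := by
  classical
  cases nonempty_fintype ι
  choose e he using exists_eval_eq_pi_single hu
  refine ⟨∑ j, C (v j) * e j, fun i => ?_⟩
  simp [he, Pi.single_apply]

end MvPolynomial

theorem stmt13 {K : Type*} [Field K] {n k : ℕ}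
    (u : Fin k → (Fin n → K)) (hu : Function.Injective u)
    (a : Fin k → K) (ha : ∀ i, a i ≠ 0)
    (S' : Finset (Fin k)) (hS' : S'.Nonempty) (hsum : ∑ i ∈ S', a i = 0) :
    ¬ (∀ f g : MvPolynomial (Fin n) K,
        (∀ m : ℕ, 1 ≤ m → (∑ i, a i * MvPolynomial.eval (u i) (f ^ m)) = 0) →
        ∃ N : ℕ, ∀ m : ℕ, N ≤ m →
          (∑ i, a i * MvPolynomial.eval (u i) (f ^ m * g)) = 0) := by
  classical
  intro hMathieu
  obtain ⟨i₀, hi₀⟩ := hS'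
  obtain ⟨f, hf⟩ := exists_eval_eq hu fun i => if i ∈ S' then (1 : K) else 0
  obtain ⟨g, hg⟩ := exists_eval_eq hu fun i => if i = i₀ then (1 : K) else 0
  have hpow : ∀ m : ℕ, 1 ≤ m → ∑ i, a i * eval (u i) (f ^ m) = 0 := by
    intro m hm
    simp [hf, ite_pow, zero_pow (Nat.one_le_iff_ne_zero.mp hm), hsum]
  obtain ⟨N, hN⟩ := hMathieu f g hpow
  have hfg := hN (N + 1) N.le_succ
  simp [hf, hg, hi₀] at hfg
  exact ha i₀ hfg
end

section
/- Let A be an integral domain over ℂ and λ ∈ ℤ with λ ≠ -1. Set u(z) = 1 + z^{-λ} if λ < -1 and u(z) = 1 + z^{-λ-2} if λ > -1, and v(z) = z^{-λ-1}. Then for all m ≥ 1, the coefficient of z^{-λ-1} in u(z)^m is 0, while the coefficient of z^{-λ-1} in u(z)^m·v(z) is 1. Consequently u^m ∈ Im Φ_λ but u^m v ∉ Im Φ_λ for all m ≥ 1, so Im Φ_λ = {g : [z^{-λ-1}]g = 0} is not a Mathieu subspace of A[z, z⁻¹]. -/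
/-!
By the binomial theorem `(1 + T k)^m` only has monomials `T (i * k)` with `i : ℕ`, and its
constant term is `1` when `k ≠ 0`. For both choices of `u` the exponent `-λ - 1` lies strictly
between `0` and `k`, so it is never a multiple of `k`, while multiplying by `v = T (-λ - 1)`
moves the constant term `1` to exactly that exponent.
-/

open LaurentPolynomial Finset

namespace LaurentPolynomial

variable {R : Type*} [CommSemiring R]

lemma coeff_mul_T (p : R[T;T⁻¹]) (n m : ℤ) : (p * T n).coeff m = p.coeff (m - n) := by
  rw [T, AddMonoidAlgebra.coeff_mul_single_apply, mul_one, sub_eq_add_neg]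

lemma coeff_one_add_T_pow (k t : ℤ) (m : ℕ) :
    ((1 + T k : R[T;T⁻¹]) ^ m).coeff t =
      ∑ i ∈ range (m + 1), if (i : ℤ) * k = t then (m.choose i : R) else 0 := by
  rw [add_comm, add_pow, AddMonoidAlgebra.coeff_sum, Finsupp.finsetSum_apply]
  refine sum_congr rfl fun i _ => ?_
  rw [T_pow, one_pow, mul_one, ← map_natCast (C : R →+* R[T;T⁻¹]), mul_comm,
    ← single_eq_C_mul_T, AddMonoidAlgebra.coeff_single, Finsupp.single_apply]

lemma coeff_one_add_T_pow_eq_zero {k t : ℤ} (h : ∀ i : ℕ, (i : ℤ) * k ≠ t) (m : ℕ) :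
    ((1 + T k : R[T;T⁻¹]) ^ m).coeff t = 0 := by
  rw [coeff_one_add_T_pow]
  exact sum_eq_zero fun i _ => if_neg (h i)

lemma coeff_zero_one_add_T_pow {k : ℤ} (hk : k ≠ 0) (m : ℕ) :
    ((1 + T k : R[T;T⁻¹]) ^ m).coeff 0 = 1 := by
  simp [coeff_one_add_T_pow, hk]

end LaurentPolynomial

lemma Int.mul_ne_of_abs_lt {k t : ℤ} (ht : t ≠ 0) (htk : |t| < |k|) (i : ℤ) : i * k ≠ t := by
  rintro rfl
  rcases eq_or_ne i 0 with rfl | hi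
  · exact ht (zero_mul k)
  · rw [abs_mul] at htk
    nlinarith [abs_nonneg k, Int.one_le_abs hi]

theorem stmt15_general {A : Type*} [CommRing A] [IsDomain A]
    (lam : ℤ) (hlam : lam ≠ -1)
    (u v : LaurentPolynomial A)
    (hu : u = if lam < -1 then 1 + T (-lam) else 1 + T (-lam - 2))
    (hv : v = T (-lam - 1)) :
    (∀ m : ℕ, 1 ≤ m → (u ^ m).coeff (-lam - 1) = 0) ∧
    (∀ m : ℕ, 1 ≤ m → (u ^ m * v).coeff (-lam - 1) = 1) ∧
    ¬ (∀ a b : LaurentPolynomial A,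
        (∀ m : ℕ, 1 ≤ m → (a ^ m).coeff (-lam - 1) = 0) →
        ∃ N : ℕ, ∀ m : ℕ, N ≤ m → (a ^ m * b).coeff (-lam - 1) = 0) := by
  set k : ℤ := if lam < -1 then -lam else -lam - 2
  have hu' : u = 1 + T k := hu.trans (apply_ite (fun n => 1 + T n) _ _ _).symm
  have ht : -lam - 1 ≠ 0 := by omega
  have htk : |-lam - 1| < |k| := by
    simp only [k]; split_ifs <;> rw [abs_lt, abs_eq_max_neg, lt_max_iff] <;> omega
  have hk : k ≠ 0 := abs_pos.mp ((abs_nonneg _).trans_lt htk)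
  have hpow (m : ℕ) : (u ^ m).coeff (-lam - 1) = 0 := by
    rw [hu']
    exact coeff_one_add_T_pow_eq_zero (fun i => Int.mul_ne_of_abs_lt ht htk i) m
  have hpow_mul (m : ℕ) : (u ^ m * v).coeff (-lam - 1) = 1 := by
    rw [hv, coeff_mul_T, sub_self, hu', coeff_zero_one_add_T_pow hk]
  refine ⟨fun m _ => hpow m, fun m _ => hpow_mul m, fun hMathieu => ?_⟩
  obtain ⟨N, hN⟩ := hMathieu u v fun m _ => hpow m
  exact one_ne_zero ((hpow_mul N).symm.trans (hN N le_rfl))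

/-- for `λ ∈ ℤ`, `λ ≠ -1`, with `u = 1 + z^(-λ)` (if `λ < -1`) or
`u = 1 + z^(-λ-2)` (if `λ > -1`) and `v = z^(-λ-1)`, the coefficient of `z^(-λ-1)`
in `u^m` is `0` while in `u^m * v` it is `1`, for every `m ≥ 1`.  Consequently the
set `{g : [z^(-λ-1)]g = 0}` (which is `Im Φ_λ`) is not a Mathieu subspace of
`A[z,z⁻¹]`. -/
theorem stmt15 {A : Type*} [CommRing A] [IsDomain A] [Algebra ℂ A]
    (lam : ℤ) (hlam : lam ≠ -1)
    (u v : LaurentPolynomial A)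
    (hu : u = if lam < -1 then 1 + T (-lam) else 1 + T (-lam - 2))
    (hv : v = T (-lam - 1)) :
    (∀ m : ℕ, 1 ≤ m → (u ^ m).coeff (-lam - 1) = 0) ∧
    (∀ m : ℕ, 1 ≤ m → (u ^ m * v).coeff (-lam - 1) = 1) ∧
    ¬ (∀ a b : LaurentPolynomial A,
        (∀ m : ℕ, 1 ≤ m → (a ^ m).coeff (-lam - 1) = 0) →
        ∃ N : ℕ, ∀ m : ℕ, N ≤ m → (a ^ m * b).coeff (-lam - 1) = 0) :=
  stmt15_general lam hlam u v hu hv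
end

section
/- Let α ∈ ℂⁿ and Ψ_{αᵢ} = ∂/∂zᵢ + αᵢzᵢ for 1 ≤ i ≤ n, acting on ℂ[z₁,...,z_n]. If some αᵢ = 0, then Σᵢ Ψ_{αᵢ}(ℂ[z]) = ℂ[z]. Conversely, if all αᵢ ≠ 0 are real and negative (e.g., the Hermite case αᵢ = -2), then 1 ∉ Σᵢ Ψ_{αᵢ}(ℂ[z]), i.e. there do not exist polynomials h₁,...,h_n ∈ ℂ[z] with 1 = Σᵢ (∂ᵢhᵢ + αᵢzᵢhᵢ). -/
open MvPolynomial

/-! ### Auxiliary definitions for the proof -/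

/-- Formal "Gaussian moments" for the weight associated to `Ψ_a = ∂ + a z`:
`m₀ = 1`, `m₁ = 0`, `m_{k+2} = -(k+1)/a · m_k`. -/
noncomputable def mom (a : ℂ) : ℕ → ℂ
  | 0 => 1
  | 1 => 0
  | (k+2) => (-((k:ℂ)+1)/a) * mom a k

lemma mom_key (a : ℂ) (ha : a ≠ 0) (k : ℕ) :
    ((k:ℂ)+1) * mom a k + a * mom a (k+2) = 0 := by
  show ((k:ℂ)+1) * mom a k + a * ((-((k:ℂ)+1)/a) * mom a k) = 0
  field_simp
  ring

/-- Product of moments over the coordinates: weight of a monomial. -/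
noncomputable def wfun {n : ℕ} (α : Fin n → ℂ) (m : Fin n →₀ ℕ) : ℂ :=
  ∏ i, mom (α i) (m i)

/-- The "Gaussian integration" linear functional on `ℂ[z₁,...,zₙ]`. -/
noncomputable def Lmap {n : ℕ} (α : Fin n → ℂ) : MvPolynomial (Fin n) ℂ →ₗ[ℂ] ℂ :=
  (Finsupp.lsum ℂ fun m => LinearMap.toSpanSingleton ℂ ℂ (wfun α m)).comp
    (AddMonoidAlgebra.coeffLinearEquiv ℂ).toLinearMap

lemma Lmap_monomial {n : ℕ} (α : Fin n → ℂ) (m : Fin n →₀ ℕ) (c : ℂ) :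
    Lmap α (monomial m c) = c * wfun α m := by
  rw [← single_eq_monomial]
  show Finsupp.lsum ℂ (fun m => LinearMap.toSpanSingleton ℂ ℂ (wfun α m)) (Finsupp.single m c) = _
  rw [Finsupp.lsum_single]
  simp [LinearMap.toSpanSingleton, smul_eq_mul]

lemma wfun_split {n : ℕ} (α : Fin n → ℂ) (m : Fin n →₀ ℕ) (i : Fin n) :
    wfun α m = mom (α i) (m i) * ∏ j ∈ Finset.univ.erase i, mom (α j) (m j) :=
  (Finset.mul_prod_erase Finset.univ _ (Finset.mem_univ i)).symm

/-- The functional annihilates the image of each `Ψ_{αᵢ}` when all `αᵢ ≠ 0`. -/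
lemma Lmap_psi {n : ℕ} (α : Fin n → ℂ) (hα : ∀ i, α i ≠ 0) (i : Fin n)
    (h : MvPolynomial (Fin n) ℂ) :
    Lmap α (pderiv i h + C (α i) * X i * h) = 0 := by
  induction h using MvPolynomial.induction_on' with
  | add p q hp hq =>
    have e : pderiv i (p+q) + C (α i) * X i * (p+q)
        = (pderiv i p + C (α i) * X i * p) + (pderiv i q + C (α i) * X i * q) := by
      rw [map_add]; ring
    rw [e, map_add, hp, hq, add_zero]
  | monomial m c =>
    rw [pderiv_monomial]
    have hX : (X i : MvPolynomial (Fin n) ℂ) = monomial (Finsupp.single i 1) 1 := rfl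
    rw [hX, C_mul_monomial, monomial_mul, map_add, Lmap_monomial, Lmap_monomial]
    rw [wfun_split α _ i, wfun_split α _ i]
    have he1 : ∀ j ∈ Finset.univ.erase i,
        mom (α j) ((m - Finsupp.single i 1 : Fin n →₀ ℕ) j) = mom (α j) (m j) := by
      intro j hj
      rw [Finsupp.tsub_apply, Finsupp.single_apply, if_neg (Finset.ne_of_mem_erase hj).symm]
      simp
    have he2 : ∀ j ∈ Finset.univ.erase i,
        mom (α j) ((Finsupp.single i 1 + m : Fin n →₀ ℕ) j) = mom (α j) (m j) := by
      intro j hj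
      rw [Finsupp.add_apply, Finsupp.single_apply, if_neg (Finset.ne_of_mem_erase hj).symm]
      simp
    rw [Finset.prod_congr rfl he1, Finset.prod_congr rfl he2]
    have h1 : (m - Finsupp.single i 1 : Fin n →₀ ℕ) i = m i - 1 := by
      rw [Finsupp.tsub_apply, Finsupp.single_apply, if_pos rfl]
    have h2 : (Finsupp.single i 1 + m : Fin n →₀ ℕ) i = m i + 1 := by
      rw [Finsupp.add_apply, Finsupp.single_apply, if_pos rfl]; ring
    rw [h1, h2]
    set R := ∏ j ∈ Finset.univ.erase i, mom (α j) (m j)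
    rcases Nat.eq_zero_or_pos (m i) with h0 | h0
    · rw [h0]
      simp [mom]
    · obtain ⟨k, hk⟩ := Nat.exists_eq_add_of_le h0
      rw [hk]
      push_cast
      have key : ((k:ℂ)+1) * mom (α i) k + (α i) * mom (α i) (k+2) = 0 :=
        mom_key (α i) (hα i) k
      calc c * (1+(k:ℂ)) * (mom (α i) (1+k-1) * R) + α i * 1 * c * (mom (α i) (1+k+1) * R)
          = (((k:ℂ)+1) * mom (α i) k + (α i) * mom (α i) (k+2)) * (c * R) := by
            rw [show 1+k-1 = k from by omega, show 1+k+1 = k+2 from by omega]; ring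
        _ = 0 := by rw [key]; ring

/-- Antiderivative of a multivariate polynomial in the `i`-th variable. -/
noncomputable def antid {n : ℕ} (i : Fin n) (g : MvPolynomial (Fin n) ℂ) :
    MvPolynomial (Fin n) ℂ :=
  ∑ m ∈ g.support, monomial (m + Finsupp.single i 1) (g.coeff m / ((m i : ℂ) + 1))

lemma pderiv_antid {n : ℕ} (i : Fin n) (g : MvPolynomial (Fin n) ℂ) :
    pderiv i (antid i g) = g := by
  rw [antid, map_sum]
  have key : ∀ m ∈ g.support,
      pderiv i (monomial (m + Finsupp.single i 1) (g.coeff m / ((m i : ℂ) + 1)))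
        = monomial m (g.coeff m) := by
    intro m _
    rw [pderiv_monomial, add_tsub_cancel_right m (Finsupp.single i 1)]
    congr 1
    have h1 : ((m + Finsupp.single i 1 : Fin n →₀ ℕ) i : ℂ) = (m i : ℂ) + 1 := by
      rw [Finsupp.add_apply, Finsupp.single_apply, if_pos rfl]; push_cast; ring
    rw [h1, div_mul_cancel₀]
    exact Nat.cast_add_one_ne_zero (m i)
  rw [Finset.sum_congr rfl key]
  exact support_sum_monomial_coeff g

/-- for the commuting operators `Ψ_{αᵢ} = ∂ᵢ + αᵢ zᵢ` on
`ℂ[z₁,...,zₙ]`: if some `αᵢ = 0` then the sum of the images is all of `ℂ[z]`;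
conversely, if every `αᵢ` is a nonzero negative real number, then `1` is not in
the sum of the images. -/
theorem stmt18 {n : ℕ} (hn : 1 ≤ n) (α : Fin n → ℂ) :
    ((∃ i, α i = 0) →
      ∀ g : MvPolynomial (Fin n) ℂ, ∃ h : Fin n → MvPolynomial (Fin n) ℂ,
        g = ∑ i, (pderiv i (h i) + C (α i) * X i * h i)) ∧
    ((∀ i, (α i).im = 0 ∧ (α i).re < 0) →
      ¬ ∃ h : Fin n → MvPolynomial (Fin n) ℂ,
        (1 : MvPolynomial (Fin n) ℂ) = ∑ i, (pderiv i (h i) + C (α i) * X i * h i)) := by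
  constructor
  · rintro ⟨i, hi⟩ g
    refine ⟨fun j => if j = i then antid i g else 0, ?_⟩
    rw [Finset.sum_eq_single i]
    · simp [hi, pderiv_antid]
    · intro j _ hj
      simp [hj]
    · intro hmem
      exact absurd (Finset.mem_univ i) hmem
  · intro hneg ⟨h, heq⟩
    have hα : ∀ i, α i ≠ 0 := by
      intro i h0
      have := (hneg i).2
      rw [h0] at this
      simp at this
    have hL := congrArg (Lmap α) heq
    rw [map_sum] at hL
    have hz : ∀ i ∈ Finset.univ, Lmap α (pderiv i (h i) + C (α i) * X i * h i) = 0 :=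
      fun i _ => Lmap_psi α hα i (h i)
    rw [Finset.sum_congr rfl hz, Finset.sum_const_zero] at hL
    have h1 : Lmap α (1 : MvPolynomial (Fin n) ℂ) = 1 := by
      rw [show (1 : MvPolynomial (Fin n) ℂ) = monomial 0 1 from rfl, Lmap_monomial]
      simp [wfun, mom]
    rw [h1] at hL
    exact one_ne_zero hL
end

section
/- There do not exist polynomials h₁,...,h_n ∈ ℂ[z₁,...,z_n] such that 1 = Σᵢ₌₁ⁿ (∂hᵢ/∂zᵢ − 2 zᵢ hᵢ). -/
/-!
The Gaussian integral `L(p) = π^{-n/2} ∫ p(x) e^{-|x|²} dx` is replaced by the linear functional sending `z^d` to the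
product of the one-variable Gaussian moments `m (d j)`. Integration by parts gives
`m (k + 1) = k / 2 · m (k - 1)`, which is exactly `L (∂ᵢ p) = L (2 zᵢ p)`. So `L` annihilates every
`∂ᵢ hᵢ - 2 zᵢ hᵢ`, while `L 1 = 1`.
-/

open MvPolynomial

variable {σ K : Type*} [Field K]

variable (K) in
/-- The moments `∫ x^k e^{-x²} dx / √π` of the normalized Gaussian. -/
noncomputable def gaussianMoment : ℕ → K
  | 0 => 1
  | 1 => 0
  | k + 2 => (k + 1) / 2 * gaussianMoment k

theorem natCast_mul_gaussianMoment_pred [NeZero (2 : K)] (k : ℕ) :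
    k * gaussianMoment K (k - 1) = 2 * gaussianMoment K (k + 1) := by
  cases k with
  | zero => simp [gaussianMoment]
  | succ k =>
    rw [Nat.add_sub_cancel, gaussianMoment]
    push_cast
    field_simp

variable (K) in
noncomputable def gaussianMonomialMoment (d : σ →₀ ℕ) : K :=
  d.prod fun _ k => gaussianMoment K k

theorem gaussianMonomialMoment_eq_mul_erase (d : σ →₀ ℕ) (i : σ) :
    gaussianMonomialMoment K d =
      gaussianMoment K (d i) * gaussianMonomialMoment K (d.erase i) :=
  (Finsupp.mul_prod_erase' d i _ fun _ => rfl).symm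

variable (σ K) in
noncomputable def gaussianFunctional : MvPolynomial σ K →ₗ[K] K :=
  (basisMonomials σ K).constr K (gaussianMonomialMoment K)

theorem gaussianFunctional_monomial (d : σ →₀ ℕ) (c : K) :
    gaussianFunctional σ K (monomial d c) = c * gaussianMonomialMoment K d := by
  have hbasis : monomial d c = c • basisMonomials σ K d := by
    rw [coe_basisMonomials, smul_monomial, smul_eq_mul, mul_one]
  rw [hbasis, map_smul, gaussianFunctional, Module.Basis.constr_basis, smul_eq_mul]

theorem gaussianFunctional_one : gaussianFunctional σ K 1 = 1 := by
  rw [← C_1, C_apply, gaussianFunctional_monomial, gaussianMonomialMoment,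
    Finsupp.prod_zero_index, one_mul]

theorem gaussianFunctional_pderiv [NeZero (2 : K)] (i : σ) (p : MvPolynomial σ K) :
    gaussianFunctional σ K (pderiv i p) = gaussianFunctional σ K (2 * X i * p) := by
  induction p using MvPolynomial.induction_on' with
  | monomial d c =>
    have hX : 2 * X i * monomial d c = monomial (Finsupp.single i 1 + d) (2 * c) := by
      rw [← map_ofNat C 2, X, mul_assoc, monomial_mul, C_mul_monomial, one_mul]
    have herase : (d - Finsupp.single i 1).erase i = (Finsupp.single i 1 + d).erase i := by
      ext j
      by_cases hj : j = i <;> simp [hj]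
    have hi : (Finsupp.single i 1 + d : σ →₀ ℕ) i = d i + 1 := by simp [add_comm]
    rw [pderiv_monomial, hX, gaussianFunctional_monomial, gaussianFunctional_monomial,
      gaussianMonomialMoment_eq_mul_erase (d - Finsupp.single i 1) i,
      gaussianMonomialMoment_eq_mul_erase (Finsupp.single i 1 + d) i, herase, hi,
      Finsupp.tsub_apply, Finsupp.single_eq_same]
    linear_combination c * gaussianMonomialMoment K ((Finsupp.single i 1 + d).erase i) *
      natCast_mul_gaussianMoment_pred (K := K) (d i)
  | add p q hp hq => rw [map_add, map_add, hp, hq, mul_add, map_add]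

/-- the constant `1` is not in the image of the Hermite operators
`Λᵢ = ∂ᵢ - 2zᵢ` on `ℂ[z₁,...,zₙ]`. -/
theorem stmt19 {n : ℕ} :
    ¬ ∃ h : Fin n → MvPolynomial (Fin n) ℂ,
      (1 : MvPolynomial (Fin n) ℂ) = ∑ i, (pderiv i (h i) - 2 * X i * h i) := by
  rintro ⟨h, hsum⟩
  have hL := congrArg (gaussianFunctional (Fin n) ℂ) hsum
  simp only [gaussianFunctional_one, map_sum, map_sub, gaussianFunctional_pderiv, sub_self,
    Finset.sum_const_zero] at hL
  exact one_ne_zero hL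
end
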